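/- Let (R, m) be a commutative Noetherian local ring and M = ⊕_{i∈I} M_i a direct sum of R-modules such that M is separated and for each i the canonical embedding of M_i into its m-adic completion M̂_i is pure. Then the canonical embedding of M into its m-adic completion M̂ is pure. -/

import Mathlib

open IsLocalRing TensorProduct

universe u v w x

/-- A linear map `f : A → B` is pure if `X ⊗ f` is injective for every
finitely generated `R`-module `X`. -/
def IsPureMap {R : Type u} [CommRing R] {A : Type v} {B : Type w}
    [AddCommGroup A] [Module R A] [AddCommGroup B] [Module R B] (f : A →ₗ[R] B) : Prop :=
  ∀ (X : Type u) [AddCommGroup X] [Module R X], Module.Finite R X →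
    Function.Injective (LinearMap.lTensor X f)

/-- A submodule is pure if its inclusion is a pure map. -/
def IsPureSubmodule {R : Type u} [CommRing R] {B : Type v} [AddCommGroup B] [Module R B]
    (A : Submodule R B) : Prop :=
  IsPureMap A.subtype

/-!
Tensoring with `X` commutes with direct sums, so an element of `X ⊗ ⨁ i, M i` vanishes as soon as
all its components in `X ⊗ M i` vanish. If `t` is killed by `X ⊗ (M → M̂)`, then, by naturality of
the completion map, each component of `t` is killed by `X ⊗ (M i → M̂ i)`, hence is zero by
purity of `M i → M̂ i`.
-/

section DirectSum

open DirectSum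

variable {R : Type u} [CommRing R] {ι : Type w} [DecidableEq ι] {M : ι → Type v}
  [∀ i, AddCommGroup (M i)] [∀ i, Module R (M i)]

theorem TensorProduct.directSumRight_apply_eq_lTensor_component
    {X : Type*} [AddCommGroup X] [Module R X] (t : X ⊗[R] ⨁ i, M i) (i : ι) :
    directSumRight R R X M t i = (component R ι M i).lTensor X t := by
  induction t using TensorProduct.induction_on with
  | zero => simp
  | tmul x m => exact directSumRight_tmul (R := R) (S := R) x m i
  | add s t hs ht => simp [hs, ht]

theorem TensorProduct.eq_zero_of_lTensor_component_eq_zero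
    {X : Type*} [AddCommGroup X] [Module R X] {t : X ⊗[R] ⨁ i, M i}
    (ht : ∀ i, (component R ι M i).lTensor X t = 0) : t = 0 := by
  apply (directSumRight R R X M).injective
  ext i
  simp [directSumRight_apply_eq_lTensor_component, ht]

theorem IsPureMap.of_directSum {B : Type*} [AddCommGroup B] [Module R B]
    {N : ι → Type*} [∀ i, AddCommGroup (N i)] [∀ i, Module R (N i)]
    {f : (⨁ i, M i) →ₗ[R] B} {g : ∀ i, M i →ₗ[R] N i} (hg : ∀ i, IsPureMap (g i))
    (q : ∀ i, B →ₗ[R] N i) (hq : ∀ i, q i ∘ₗ f = g i ∘ₗ component R ι M i) :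
    IsPureMap f := by
  intro X _ _ hX
  rw [injective_iff_map_eq_zero]
  intro t ht
  refine eq_zero_of_lTensor_component_eq_zero fun i ↦ ?_
  refine (injective_iff_map_eq_zero _).1 (hg i X hX) _ ?_
  rw [← LinearMap.comp_apply, ← LinearMap.lTensor_comp, ← hq i, LinearMap.lTensor_comp,
    LinearMap.comp_apply, ht, map_zero]

end DirectSum

open DirectSum in
theorem directSum_pure_in_completion
    (R : Type u) [CommRing R] [IsLocalRing R]
    {ι : Type w} [DecidableEq ι] (M : ι → Type v)
    [∀ i, AddCommGroup (M i)] [∀ i, Module R (M i)]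
    (h : ∀ i, IsPureMap (AdicCompletion.of (maximalIdeal R) (M i))) :
    IsPureMap (AdicCompletion.of (maximalIdeal R) (⨁ i, M i)) :=
  IsPureMap.of_directSum h
    (fun i ↦ (AdicCompletion.map (maximalIdeal R) (component R ι M i)).restrictScalars R)
    fun i ↦ by ext; simp [AdicCompletion.map_of]
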